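/- arXiv:math/9907119 — 2 statements merged into one kernel-verified Lean document; each statement's English description precedes it below -/
import Mathlib

section
/- If gcd(m,n) = 1, then the Cartesian product K_m □ K_n is isomorphic to the circulant graph on Z/mnZ where i ~ j iff i ≠ j and (m | i-j or n | i-j). -/
open SimpleGraph

/-- A graph is circulant iff its automorphism group contains a transitive cyclic subgroup,
i.e. some automorphism whose iterates act transitively on the vertices. -/
def SimpleGraph.IsCirculant {V : Type*} (G : SimpleGraph V) : Prop :=
  ∃ φ : G ≃g G, ∀ v w : V, ∃ k : ℕ, (φ.toEquiv ^ k) v = w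

/-- The tensor (categorical/Kronecker) product of simple graphs. -/
def SimpleGraph.tensor {α β : Type*} (G : SimpleGraph α) (H : SimpleGraph β) :
    SimpleGraph (α × β) where
  Adj x y := G.Adj x.1 y.1 ∧ H.Adj x.2 y.2
  symm := ⟨fun _ _ h => ⟨G.adj_symm h.1, H.adj_symm h.2⟩⟩
  loopless := ⟨fun x h => G.irrefl h.1⟩

/-!
By the Chinese remainder theorem, `ZMod (m * n) ≃+* ZMod m × ZMod n`, and `m ∣ z` (resp. `n ∣ z`)
says that the first (resp. second) coordinate of the image of `z` vanishes. So the circulant graph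
is the circulant graph on `ZMod m × ZMod n` whose jumps are the two coordinate axes, which is the
box product of the circulant graphs with all jumps, i.e. of two complete graphs.
-/

namespace SimpleGraph

variable {α α' β β' : Type*} {G : SimpleGraph α} {G' : SimpleGraph α'}
  {H : SimpleGraph β} {H' : SimpleGraph β'}

def Iso.boxProdCongr (e : G ≃g G') (f : H ≃g H') : G.boxProd H ≃g G'.boxProd H' where
  toEquiv := e.toEquiv.prodCongr f.toEquiv
  map_rel_iff' := by simp [boxProd_adj, Iso.map_adj_iff]

variable {A B : Type*} [AddGroup A] [AddGroup B]

def Iso.circulantGraph (f : A ≃+ B) (s : Set B) :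
    circulantGraph (f ⁻¹' s) ≃g circulantGraph s where
  toEquiv := f.toEquiv
  map_rel_iff' := by simp [← map_sub]

theorem circulantGraph_univ : circulantGraph (Set.univ : Set A) = ⊤ := by
  ext; simp

theorem circulantGraph_union_prod_eq_boxProd (s : Set A) (t : Set B) :
    circulantGraph (s ×ˢ {0} ∪ {0} ×ˢ t) = (circulantGraph s).boxProd (circulantGraph t) := by
  ext ⟨a, b⟩ ⟨a', b'⟩
  simp only [circulantGraph_adj, boxProd_adj, Set.mem_union, Set.mem_prod, Set.mem_singleton_iff,
    Prod.fst_sub, Prod.snd_sub, sub_eq_zero, Prod.mk.injEq]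
  grind

end SimpleGraph

namespace ZMod

variable {m n : ℕ} [NeZero (m * n)] (h : m.Coprime n) (z : ZMod (m * n))

theorem chineseRemainder_fst_eq_zero_iff : (chineseRemainder h z).1 = 0 ↔ m ∣ z.val := by
  change (castHom (Nat.lcm_dvd_mul m n) (ZMod m × ZMod n) z).1 = 0 ↔ _
  rw [castHom_apply, Prod.fst_zmod_cast, ← natCast_val, natCast_eq_zero_iff]

theorem chineseRemainder_snd_eq_zero_iff : (chineseRemainder h z).2 = 0 ↔ n ∣ z.val := by
  change (castHom (Nat.lcm_dvd_mul m n) (ZMod m × ZMod n) z).2 = 0 ↔ _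
  rw [castHom_apply, Prod.snd_zmod_cast, ← natCast_val, natCast_eq_zero_iff]

end ZMod

theorem stmt_13 (m n : ℕ) (hm : 1 ≤ m) (hn : 1 ≤ n) (hcop : Nat.Coprime m n) :
    Nonempty
      (SimpleGraph.boxProd (completeGraph (Fin m)) (completeGraph (Fin n)) ≃g
        SimpleGraph.circulantGraph
          {z : ZMod (m * n) | (m : ℕ) ∣ z.val ∨ (n : ℕ) ∣ z.val}) := by
  have : NeZero m := ⟨by omega⟩
  have : NeZero n := ⟨by omega⟩
  have jumps : {z : ZMod (m * n) | m ∣ z.val ∨ n ∣ z.val} =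
      ZMod.chineseRemainder hcop ⁻¹' (Set.univ ×ˢ {0} ∪ {0} ×ˢ Set.univ) := by
    ext z
    simp [ZMod.chineseRemainder_fst_eq_zero_iff, ZMod.chineseRemainder_snd_eq_zero_iff, or_comm]
  rw [jumps]
  refine ⟨(Iso.boxProdCongr (Iso.completeGraph (ZMod.finEquiv m).toEquiv)
    (Iso.completeGraph (ZMod.finEquiv n).toEquiv)).trans ?_⟩
  rw [completeGraph_eq_top, completeGraph_eq_top, ← circulantGraph_univ, ← circulantGraph_univ,
    ← circulantGraph_union_prod_eq_boxProd]
  exact (Iso.circulantGraph (ZMod.chineseRemainder hcop).toAddEquiv _).symm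
end

section
/- If G is a connected bipartite circulant graph, then K_{n,n} ⊗ G is circulant. -/
open SimpleGraph

/-! A proper `2`-colouring `c` of `G` splits `K_{n,n} ⊗ G` into two disjoint copies of the
blow-up of `G` in which every vertex is replaced by `n` independent twins: the vertex `(s, v)`
lies in the copy given by the side `s` flipped by `c v`, and edges never change copy.
The blow-up of a circulant graph is circulant, the cyclic automorphism acting as an odometer,
and two copies of a circulant graph are circulant: swap the copies and apply the cyclic
automorphism of `G` on one of the two ways back. -/

namespace Equiv.Perm

variable {α V : Type*}

theorem exists_pow_finRotate_apply_eq {n : ℕ} (i j : Fin n) : ∃ k : ℕ, (finRotate n ^ k) i = j :=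
  match n, i, j with
  | 1, i, j => ⟨0, Subsingleton.elim i j⟩
  | _ + 2, _, _ =>
    (isCycle_finRotate.sameCycle (mem_support.1 (support_finRotate ▸ Finset.mem_univ _))
      (mem_support.1 (support_finRotate ▸ Finset.mem_univ _))).exists_nat_pow_eq

/-- The odometer with digits in `α` and `V`: the `V`-digit moves by `φ`, and the `α`-digit
moves by `σ` each time the `V`-digit leaves `v₀`. -/
def odometer [DecidableEq V] (σ : Perm α) (φ : Perm V) (v₀ : V) : Perm (α × V) :=
  (prodComm α V).trans ((prodShear φ fun v => if v = v₀ then σ else 1).trans (prodComm V α))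

variable [DecidableEq V] (σ : Perm α) (φ : Perm V) (v₀ : V)

theorem odometer_apply (a : α) (v : V) :
    odometer σ φ v₀ (a, v) = (if v = v₀ then σ a else a, φ v) := by
  by_cases h : v = v₀ <;> simp [odometer, h]

theorem odometer_apply_snd (x : α × V) : (odometer σ φ v₀ x).2 = φ x.2 := rfl

theorem odometer_pow_apply_of_forall_ne (a : α) (v : V) (k : ℕ)
    (hk : ∀ j < k, (φ ^ j) v ≠ v₀) : (odometer σ φ v₀ ^ k) (a, v) = (a, (φ ^ k) v) := by
  induction k with
  | zero => rfl
  | succ k ih =>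
    rw [pow_succ', mul_apply, ih fun j hj => hk j (by omega), odometer_apply,
      if_neg (hk k k.lt_succ_self), ← mul_apply, ← pow_succ']

theorem sameCycle_odometer (hσ : ∀ a b, ∃ k : ℕ, (σ ^ k) a = b)
    (hφ : ∀ v w, ∃ k : ℕ, (φ ^ k) v = w) (x y : α × V) : (odometer σ φ v₀).SameCycle x y := by
  have to_base (a : α) (v : V) : (odometer σ φ v₀).SameCycle (a, v) (a, v₀) := by
    refine ⟨Nat.find (hφ v v₀), ?_⟩
    rw [zpow_natCast, odometer_pow_apply_of_forall_ne σ φ v₀ a v _ fun j hj => Nat.find_min _ hj,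
      Nat.find_spec (hφ v v₀)]
  have carry (a : α) : (odometer σ φ v₀).SameCycle (a, v₀) (σ a, v₀) := by
    have h : odometer σ φ v₀ (a, v₀) = (σ a, φ v₀) := by simp [odometer_apply]
    exact sameCycle_apply_left.1 (h ▸ to_base (σ a) (φ v₀))
  have along (a : α) (k : ℕ) : (odometer σ φ v₀).SameCycle (a, v₀) ((σ ^ k) a, v₀) := by
    induction k with
    | zero => rfl
    | succ k ih => exact ih.trans (pow_succ' σ k ▸ carry _)
  obtain ⟨a, v⟩ := x
  obtain ⟨b, w⟩ := y
  obtain ⟨k, rfl⟩ := hσ a b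
  exact (to_base a v).trans ((along a k).trans (to_base _ w).symm)

end Equiv.Perm

namespace SimpleGraph

variable {V W α : Type*} {G : SimpleGraph V} {H : SimpleGraph W}

theorem IsCirculant.of_iso (hG : G.IsCirculant) (e : G ≃g H) : H.IsCirculant := by
  obtain ⟨φ, hφ⟩ := hG
  refine ⟨e.symm.trans (φ.trans e), fun v w => ?_⟩
  obtain ⟨k, hk⟩ := hφ (e.symm v) (e.symm w)
  refine ⟨k, ?_⟩
  have : (e.symm.trans (φ.trans e)).toEquiv ^ k = e.toEquiv.permCongrHom (φ.toEquiv ^ k) :=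
    (map_pow e.toEquiv.permCongrHom φ.toEquiv k).symm
  rw [this]
  exact (congrArg e hk).trans (e.apply_symm_apply w)

theorem IsCirculant.sum_self (hG : G.IsCirculant) : (G ⊕g G).IsCirculant := by
  obtain ⟨φ, hφ⟩ := hG
  let θ : G ⊕g G ≃g G ⊕g G :=
    ⟨(Equiv.sumComm V V).trans (Equiv.sumCongr φ.toEquiv (Equiv.refl V)), by
      rintro (x | x) (y | y) <;> simp [φ.map_adj_iff]⟩
  have hθ (k : ℕ) : θ.toEquiv ^ (2 * k) = Equiv.sumCongr (φ.toEquiv ^ k) (φ.toEquiv ^ k) := by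
    have hsq : θ.toEquiv ^ 2 = Equiv.sumCongr φ.toEquiv φ.toEquiv := by
      ext (x | x) <;> simp [θ, sq]
    rw [pow_mul, hsq]
    exact (map_pow (Equiv.Perm.sumCongrHom V V) (φ.toEquiv, φ.toEquiv) k).symm
  refine ⟨θ, ?_⟩
  rintro (x | x) (y | y)
  · obtain ⟨k, rfl⟩ := hφ x y
    exact ⟨2 * k, by rw [hθ]; rfl⟩
  · obtain ⟨k, rfl⟩ := hφ x y
    exact ⟨2 * k + 1, by rw [pow_succ', Equiv.Perm.mul_apply, hθ]; rfl⟩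
  · obtain ⟨k, rfl⟩ := hφ (φ x) y
    exact ⟨2 * k + 1, by rw [pow_succ, Equiv.Perm.mul_apply, hθ]; rfl⟩
  · obtain ⟨k, rfl⟩ := hφ x y
    exact ⟨2 * k, by rw [hθ]; rfl⟩

theorem IsCirculant.comap_snd_fin [Finite V] (hG : G.IsCirculant) (n : ℕ) :
    (G.comap (Prod.snd : Fin n × V → V)).IsCirculant := by
  classical
  rcases isEmpty_or_nonempty V with hV | hV
  · exact ⟨Iso.refl, fun x => isEmptyElim x.2⟩
  obtain ⟨v₀⟩ := hV
  obtain ⟨φ, hφ⟩ := hG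
  let ψ : G.comap (Prod.snd : Fin n × V → V) ≃g G.comap Prod.snd :=
    ⟨Equiv.Perm.odometer (finRotate n) φ.toEquiv v₀, fun {x y} => by
      simpa [Equiv.Perm.odometer_apply_snd] using φ.map_adj_iff⟩
  exact ⟨ψ, fun x y => (Equiv.Perm.sameCycle_odometer _ _ v₀
    Equiv.Perm.exists_pow_finRotate_apply_eq hφ x y).exists_nat_pow_eq⟩

def Iso.tensorCompleteBipartite (c : G.Coloring Bool) :
    (completeBipartiteGraph α α).tensor G ≃g
      G.comap (Prod.snd : α × V → V) ⊕g G.comap (Prod.snd : α × V → V) where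
  toFun p := bif c p.2 then (Equiv.sumProdDistrib α α V p).swap else Equiv.sumProdDistrib α α V p
  invFun q := (Equiv.sumProdDistrib α α V).symm
    (bif c (q.elim Prod.snd Prod.snd) then q.swap else q)
  left_inv := by rintro ⟨a | a, v⟩ <;> cases h : c v <;> simp [h]
  right_inv := by rintro (⟨a, v⟩ | ⟨a, v⟩) <;> cases h : c v <;> simp [h]
  map_rel_iff' := by
    rintro ⟨a | a, v⟩ ⟨b | b, w⟩ <;>
    · have hc : G.Adj v w → c v ≠ c w := c.valid
      cases hv : c v <;> cases hw : c w <;> simp_all [tensor]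

end SimpleGraph

theorem stmt_15_general {V : Type*} [Fintype V] (n : ℕ) (G : SimpleGraph V)
    (hbip : G.Colorable 2) (hG : G.IsCirculant) :
    ((completeBipartiteGraph (Fin n) (Fin n)).tensor G).IsCirculant := by
  obtain ⟨c⟩ := hbip
  exact (hG.comap_snd_fin n).sum_self.of_iso
    (Iso.tensorCompleteBipartite (G.recolorOfEquiv finTwoEquiv c)).symm

theorem stmt_15 {V : Type*} [Fintype V] (n : ℕ) (G : SimpleGraph V)
    (hconn : G.Connected) (hbip : G.Colorable 2) (hG : G.IsCirculant) :
    ((completeBipartiteGraph (Fin n) (Fin n)).tensor G).IsCirculant :=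
  stmt_15_general n G hbip hG
end
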